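/- Assume p₁p₂ < 1. If π is an invariant distribution of the random walk (m̄_c(t)), then P(1,0) = (λ₂ − μ₂c₂ + p₁(λ₁ − μ₁c₁) − p₁(λ₁ + λ₂p₂)·π(0,0)) / ((1 − p₁p₂)·λ₂), where P(1,0) = Σ_{m₁∈ℕ} π(m₁,0). -/

import Mathlib

/-- π is an invariant (stationary) probability distribution of the random walk (m̄_l(t)):
nonnegative, sums to 1, and satisfies the balance equations. -/
def IsInvariantDist (la1 la2 mu1 mu2 l1 l2 p1 p2 : ℝ) (π : ℕ × ℕ → ℝ) : Prop :=
  (∀ m, 0 ≤ π m) ∧ (∑' m : ℕ × ℕ, π m = 1) ∧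
  ∀ m1 m2 : ℕ,
    π (m1, m2) * (mu1 * l1 + mu2 * l2
        + (la1 + p2 * la2 * (if m2 = 0 then 1 else 0)) * (if 0 < m1 then 1 else 0)
        + (la2 + p1 * la1 * (if m1 = 0 then 1 else 0)) * (if 0 < m2 then 1 else 0))
    = mu1 * l1 * π (m1 - 1, m2) * (if 0 < m1 then 1 else 0)
      + mu2 * l2 * π (m1, m2 - 1) * (if 0 < m2 then 1 else 0)
      + (la1 + p2 * la2 * (if m2 = 0 then 1 else 0)) * π (m1 + 1, m2)
      + (la2 + p1 * la1 * (if m1 = 0 then 1 else 0)) * π (m1, m2 + 1)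

/-!
In a stationary regime the net probability flux across every vertical cut
`{m₁ ≤ i} | {m₁ ≥ i + 1}` vanishes: mass leaves column `i` to the right at rate `μ₁c₁`, and
enters it from column `i + 1` at rate `λ₁`, plus `p₂λ₂` from the state `(i + 1, 0)`.
Summing the balance equations along column `i`, the vertical moves telescope and what is left
says that the flux across the cut right of column `i` equals the one across the cut left of it;
the leftmost one is zero. Summing the vanishing fluxes over all cuts gives
`λ₁(1 - Σⱼ π(0,j)) + p₂λ₂(P(1,0) - π(0,0)) = μ₁c₁`, and the same argument for horizontal cuts
(i.e. for the model with the two coordinates exchanged) gives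
`λ₂(1 - P(1,0)) + p₁λ₁(Σⱼ π(0,j) - π(0,0)) = μ₂c₂`. Eliminating `Σⱼ π(0,j)` yields the formula.
-/

theorem HasSum.sub_prev {g : ℕ → ℝ} {s : ℝ} (hg : HasSum g s) :
    HasSum (fun n => g n - if 0 < n then g (n - 1) else 0) 0 := by
  have hprev : HasSum (fun n => if 0 < n then g (n - 1) else 0) s := by
    simpa using HasSum.zero_add (f := fun n => if 0 < n then g (n - 1) else 0) (by simpa using hg)
  simpa using hg.sub hprev

theorem HasSum.comp_add_one {f : ℕ → ℝ} {a : ℝ} (hf : HasSum f a) :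
    HasSum (fun n => f (n + 1)) (a - f 0) := by
  simpa using (hasSum_nat_add_iff' 1).2 hf

theorem HasSum.const_add_ite_zero_mul {w : ℕ → ℝ} {W : ℝ} (hw : HasSum w W) (c d : ℝ) :
    HasSum (fun n => (c + d * if n = 0 then 1 else 0) * w n) (c * W + d * w 0) := by
  have hfun : (fun n => (c + d * if n = 0 then 1 else 0) * w n)
      = fun n => c * w n + d * if n = 0 then w 0 else 0 := by
    funext n
    split_ifs with hn <;> simp [hn, add_mul]
  rw [hfun]
  exact (hw.mul_left c).add ((hasSum_ite_eq 0 (w 0)).mul_left d)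

/-- Net rate at which probability crosses from column `i` to column `i + 1`. -/
noncomputable def netFlux (la1 la2 mu1 l1 p2 : ℝ) (π : ℕ × ℕ → ℝ) (i : ℕ) : ℝ :=
  mu1 * l1 * ∑' j, π (i, j) - (la1 * ∑' j, π (i + 1, j) + p2 * la2 * π (i + 1, 0))

namespace IsInvariantDist

variable {la1 la2 mu1 mu2 l1 l2 p1 p2 : ℝ} {π : ℕ × ℕ → ℝ}

theorem summable (h : IsInvariantDist la1 la2 mu1 mu2 l1 l2 p1 p2 π) : Summable π := by
  by_contra hs
  have htot := h.2.1
  rw [tsum_eq_zero_of_not_summable hs] at htot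
  exact zero_ne_one htot

theorem hasSum (h : IsInvariantDist la1 la2 mu1 mu2 l1 l2 p1 p2 π) : HasSum π 1 :=
  h.2.1 ▸ h.summable.hasSum

theorem swap (h : IsInvariantDist la1 la2 mu1 mu2 l1 l2 p1 p2 π) :
    IsInvariantDist la2 la1 mu2 mu1 l2 l1 p2 p1 (π ∘ Prod.swap) := by
  obtain ⟨hpos, htot, hbal⟩ := h
  refine ⟨fun m => hpos _, ?_, fun m1 m2 => ?_⟩
  · rw [← htot]
    exact (Equiv.prodComm ℕ ℕ).tsum_eq π
  · simp only [Function.comp_apply, Prod.swap_prod_mk]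
    linear_combination hbal m2 m1

theorem netFlux_eq (h : IsInvariantDist la1 la2 mu1 mu2 l1 l2 p1 p2 π) (i : ℕ) :
    netFlux la1 la2 mu1 l1 p2 π i = if 0 < i then netFlux la1 la2 mu1 l1 p2 π (i - 1) else 0 := by
  have hcol : ∀ k, HasSum (fun j => π (k, j)) (∑' j, π (k, j)) :=
    fun k => (h.summable.prod_factor k).hasSum
  set e : ℝ := if 0 < i then 1 else 0
  -- The balance equation at `(i, j)` splits into the net vertical flux out of `(i, j)`, which
  -- telescopes along column `i`, and the exchange with the columns `i ± 1`.
  have hvertical := (((hcol i).mul_left (mu2 * l2)).sub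
    ((hcol i).comp_add_one.mul_left (la2 + p1 * la1 * if i = 0 then 1 else 0))).sub_prev
  have hhorizontal := ((((hcol i).mul_left (mu1 * l1)).add
    (((hcol i).const_add_ite_zero_mul la1 (p2 * la2)).mul_left e)).sub
    ((hcol (i - 1)).mul_left (mu1 * l1 * e))).sub
    ((hcol (i + 1)).const_add_ite_zero_mul la1 (p2 * la2))
  have hsum := (hvertical.add hhorizontal).unique (by
    convert hasSum_zero with j
    have hbal := h.2.2 i j
    rcases j with _ | j
    · simp only [lt_irrefl, if_false, if_true] at hbal ⊢
      linear_combination hbal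
    · simp only [Nat.succ_pos, if_true, Nat.add_sub_cancel, Nat.succ_ne_zero, if_false] at hbal ⊢
      linear_combination hbal)
  simp only [netFlux]
  split_ifs with hi
  · simp only [e, if_pos hi, Nat.sub_add_cancel hi] at hsum ⊢
    linear_combination hsum
  · simp only [e, if_neg hi] at hsum
    linear_combination hsum

theorem netFlux_eq_zero (h : IsInvariantDist la1 la2 mu1 mu2 l1 l2 p1 p2 π) (i : ℕ) :
    netFlux la1 la2 mu1 l1 p2 π i = 0 := by
  induction i with
  | zero => simpa using h.netFlux_eq 0
  | succ i ih => rw [h.netFlux_eq, if_pos i.succ_pos, Nat.add_sub_cancel, ih]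

theorem vertical_cut_balance (h : IsInvariantDist la1 la2 mu1 mu2 l1 l2 p1 p2 π) :
    la1 * (1 - ∑' j, π (0, j)) + p2 * la2 * ((∑' i, π (i, 0)) - π (0, 0)) = mu1 * l1 := by
  have hcols : HasSum (fun i => ∑' j, π (i, j)) 1 :=
    h.hasSum.prod_fiberwise fun i => (h.summable.prod_factor i).hasSum
  have hrow : HasSum (fun i => π (i, 0)) (∑' i, π (i, 0)) :=
    (h.swap.summable.prod_factor 0).hasSum
  have hflux : HasSum (netFlux la1 la2 mu1 l1 p2 π)
      (mu1 * l1 * 1 - (la1 * (1 - ∑' j, π (0, j)) + p2 * la2 * ((∑' i, π (i, 0)) - π (0, 0)))) :=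
    (hcols.mul_left _).sub
      ((hcols.comp_add_one.mul_left la1).add (hrow.comp_add_one.mul_left (p2 * la2)))
  have hzero := hflux.unique (by rw [funext h.netFlux_eq_zero]; exact hasSum_zero)
  linarith

end IsInvariantDist

theorem stmt4_general (la1 la2 mu1 mu2 c1 c2 p1 p2 : ℝ)
    (hla2 : 0 < la2)
    (hp : p1 * p2 < 1)
    (π : ℕ × ℕ → ℝ) (hπ : IsInvariantDist la1 la2 mu1 mu2 c1 c2 p1 p2 π) :
    (∑' m1 : ℕ, π (m1, 0))
      = (la2 - mu2 * c2 + p1 * (la1 - mu1 * c1) - p1 * (la1 + la2 * p2) * π (0, 0))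
          / ((1 - p1 * p2) * la2) := by
  have hvertical := hπ.vertical_cut_balance
  have hhorizontal := hπ.swap.vertical_cut_balance
  simp only [Function.comp_apply, Prod.swap_prod_mk] at hhorizontal
  have hden : (1 - p1 * p2) * la2 ≠ 0 := (mul_pos (sub_pos.2 hp) hla2).ne'
  rw [eq_div_iff hden]
  linear_combination -hhorizontal - p1 * hvertical

theorem stmt4 (la1 la2 mu1 mu2 c1 c2 p1 p2 : ℝ)
    (hla1 : 0 < la1) (hla2 : 0 < la2) (hmu1 : 0 < mu1) (hmu2 : 0 < mu2)
    (hc1 : 0 < c1) (hc2 : 0 < c2)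
    (hp1 : 0 ≤ p1) (hp1' : p1 ≤ 1) (hp2 : 0 ≤ p2) (hp2' : p2 ≤ 1)
    (hp : p1 * p2 < 1)
    (π : ℕ × ℕ → ℝ) (hπ : IsInvariantDist la1 la2 mu1 mu2 c1 c2 p1 p2 π) :
    (∑' m1 : ℕ, π (m1, 0))
      = (la2 - mu2 * c2 + p1 * (la1 - mu1 * c1) - p1 * (la1 + la2 * p2) * π (0, 0))
          / ((1 - p1 * p2) * la2) :=
  stmt4_general la1 la2 mu1 mu2 c1 c2 p1 p2 hla2 hp π hπ
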